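/- arXiv:2005.05846 — 5 statements merged into one kernel-verified Lean document; each statement's English description precedes it below -/
import Mathlib

section
/- Given angles β ∈ (0,π) and k with β < k < 2π−β, and any flap angle α ∈ [0,2π), there exists a unique pair (θ₁, θ₂) with θ₁, θ₂ ∈ (0,π) satisfying θ₁ + θ₂ = k and cos θ₂ = cos θ₁ cos β + sin θ₁ sin β cos α. -/
open Real

private lemma cos_lt_one_aux {x : ℝ} (h0 : 0 < x) (h2 : x < 2 * π) : Real.cos x < 1 :=
  lt_of_le_of_ne (Real.cos_le_one x)
    (fun h => by
      have := (Real.cos_eq_one_iff_of_lt_of_lt (by linarith) h2).1 h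
      linarith)

private lemma mem_Ioo_of_sin_pos {x : ℝ} (h1 : -π < x) (h2 : x < 2 * π)
    (hs : 0 < Real.sin x) : 0 < x ∧ x < π := by
  constructor
  · by_contra h
    push_neg at h
    have := Real.sin_nonpos_of_nonpos_of_neg_pi_le h (le_of_lt h1)
    linarith
  · by_contra h
    push_neg at h
    have h3 : 0 ≤ Real.sin (x - π) :=
      Real.sin_nonneg_of_nonneg_of_le_pi (by linarith) (by linarith)
    rw [Real.sin_sub_pi] at h3
    linarith

theorem single_vertex_existence_uniqueness
    (β k α : ℝ) (hβ : β ∈ Set.Ioo 0 π)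
    (hk₁ : β < k) (hk₂ : k < 2 * π - β)
    (hα : α ∈ Set.Ico 0 (2 * π)) :
    ∃! p : ℝ × ℝ, p.1 ∈ Set.Ioo 0 π ∧ p.2 ∈ Set.Ioo 0 π ∧
      p.1 + p.2 = k ∧
      Real.cos p.2 = Real.cos p.1 * Real.cos β + Real.sin p.1 * Real.sin β * Real.cos α := by
  obtain ⟨hβ0, hβπ⟩ := hβ
  have hπ := Real.pi_pos
  set A : ℝ := Real.cos β - Real.cos k with hAdef
  set B : ℝ := Real.sin k - Real.sin β * Real.cos α with hBdef
  have hApos : 0 < A := by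
    rcases le_or_gt k π with h | h
    · have := Real.cos_lt_cos_of_nonneg_of_le_pi (le_of_lt hβ0) h hk₁
      simp only [hAdef]; linarith
    · have h1 : Real.cos (2 * π - k) = Real.cos k := Real.cos_two_pi_sub k
      have h2 := Real.cos_lt_cos_of_nonneg_of_le_pi (le_of_lt hβ0)
        (by linarith : 2 * π - k ≤ π) (by linarith : β < 2 * π - k)
      simp only [hAdef]; linarith
  have hsβ : 0 < Real.sin β := Real.sin_pos_of_pos_of_lt_pi hβ0 hβπ
  have hS : 0 < 1 - Real.cos k * Real.cos β - Real.sin k * Real.sin β * Real.cos α := by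
    have hca : |Real.cos α| ≤ 1 := Real.abs_cos_le_one α
    have hle : Real.sin k * Real.sin β * Real.cos α ≤ |Real.sin k| * Real.sin β := by
      calc Real.sin k * Real.sin β * Real.cos α
          ≤ |Real.sin k * Real.sin β * Real.cos α| := le_abs_self _
        _ = |Real.sin k| * Real.sin β * |Real.cos α| := by
            rw [abs_mul, abs_mul, abs_of_pos hsβ]
        _ ≤ |Real.sin k| * Real.sin β * 1 :=
            mul_le_mul_of_nonneg_left hca (by positivity)
        _ = |Real.sin k| * Real.sin β := by ring
    rcases abs_cases (Real.sin k) with ⟨he, _⟩ | ⟨he, _⟩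
    · have h1 : Real.cos (k - β) < 1 := cos_lt_one_aux (by linarith) (by linarith)
      rw [Real.cos_sub] at h1
      rw [he] at hle
      nlinarith
    · have h1 : Real.cos (k + β) < 1 := cos_lt_one_aux (by linarith) (by linarith)
      rw [Real.cos_add] at h1
      rw [he] at hle
      nlinarith
  -- the candidate angle
  set t : ℝ := B / A with htdef
  set θ : ℝ := π / 2 - Real.arctan t with hθdef
  have hθ1 : 0 < θ := by
    have := Real.arctan_lt_pi_div_two t
    simp only [hθdef]; linarith
  have hθ2 : θ < π := by
    have := Real.neg_pi_div_two_lt_arctan t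
    simp only [hθdef]; linarith
  have hsinθ : Real.sin θ = Real.cos (Real.arctan t) := by
    rw [hθdef, Real.sin_pi_div_two_sub]
  have hcosθ : Real.cos θ = Real.sin (Real.arctan t) := by
    rw [hθdef, Real.cos_pi_div_two_sub]
  have hsinθpos : 0 < Real.sin θ := Real.sin_pos_of_pos_of_lt_pi hθ1 hθ2
  have key : A * Real.cos θ = B * Real.sin θ := by
    rw [hcosθ, hsinθ, Real.sin_arctan, Real.cos_arctan]
    have hAt : A * t = B := by
      rw [htdef]; field_simp
    rw [mul_one_div, ← mul_div_assoc, hAt]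
  have hkey2 : A * Real.sin (k - θ) =
      Real.sin θ * (1 - Real.cos k * Real.cos β - Real.sin k * Real.sin β * Real.cos α) := by
    rw [Real.sin_sub]
    have hpy := Real.sin_sq_add_cos_sq k
    simp only [hAdef, hBdef] at key ⊢
    linear_combination Real.sin k * key + Real.sin θ * hpy
  have hsinkθ : 0 < Real.sin (k - θ) := by nlinarith
  have hkθ := mem_Ioo_of_sin_pos (by linarith : -π < k - θ) (by linarith : k - θ < 2 * π) hsinkθ
  refine ⟨(θ, k - θ), ⟨⟨hθ1, hθ2⟩, ⟨hkθ.1, hkθ.2⟩, by ring, ?_⟩, ?_⟩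
  · show Real.cos (k - θ) = Real.cos θ * Real.cos β + Real.sin θ * Real.sin β * Real.cos α
    rw [Real.cos_sub]
    simp only [hAdef, hBdef] at key
    linear_combination -key
  · rintro ⟨x, y⟩ ⟨⟨hx1, hx2⟩, ⟨hy1, hy2⟩, hsum, heq⟩
    have hy : y = k - x := by linarith
    subst hy
    simp only at heq
    rw [Real.cos_sub] at heq
    have keyx : A * Real.cos x = B * Real.sin x := by
      simp only [hAdef, hBdef]
      linear_combination -heq
    have hzero : A * Real.sin (x - θ) = 0 := by
      rw [Real.sin_sub]
      simp only [hAdef, hBdef] at key keyx ⊢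
      linear_combination Real.sin x * key - Real.sin θ * keyx
    have h0 : Real.sin (x - θ) = 0 := by
      rcases mul_eq_zero.1 hzero with h | h
      · linarith
      · exact h
    have hxθ : x - θ = 0 :=
      (Real.sin_eq_zero_iff_of_lt_of_lt (by linarith) (by linarith)).1 h0
    have : x = θ := by linarith
    subst this
    rfl
end

section
/- Let β ∈ (0,π) and α ∈ (0,2π) with α ≠ π be fixed. The function f(θ₁) = θ₁ + arccos(cos θ₁ cos β + sin θ₁ sin β cos α) is strictly monotonically increasing on [0,π]. -/
/-! The argument of the arccos is `g θ = cos θ cos β + sin θ sin β cos α`, and a direct computation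
gives `g² + g'² = cos² β + cos² α sin² β`, which is `< 1` exactly when `sin β ≠ 0` and `sin α ≠ 0`.
Hence `|g'| < √(1 - g²)`, so the derivative `1 - g' / √(1 - g²)` of `θ + arccos (g θ)` is positive
on all of `ℝ`. -/

open Real

theorem Real.sin_ne_zero_of_mem_Ioo_of_ne_pi {α : ℝ} (hα : α ∈ Set.Ioo 0 (2 * π)) (hα' : α ≠ π) :
    sin α ≠ 0 := by
  have hshift : sin (α - π) ≠ 0 := by
    rw [Ne, sin_eq_zero_iff_of_lt_of_lt (by linarith [hα.1]) (by linarith [hα.2]), sub_eq_zero]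
    exact hα'
  rwa [sin_sub_pi, neg_ne_zero] at hshift

theorem strictMono_add_arccos {g g' : ℝ → ℝ} (hg : ∀ x, HasDerivAt g (g' x) x)
    (hbound : ∀ x, g x ^ 2 + g' x ^ 2 < 1) : StrictMono fun x => x + arccos (g x) := by
  refine strictMono_of_deriv_pos fun x => ?_
  have hg_sq : g x ^ 2 < 1 := by nlinarith [hbound x, sq_nonneg (g' x)]
  have hg_ne_one : g x ≠ 1 := fun h => by simp [h] at hg_sq
  have hg_ne_neg_one : g x ≠ -1 := fun h => by simp [h] at hg_sq
  have hderiv : HasDerivAt (fun x => x + arccos (g x)) (1 + -(1 / √(1 - g x ^ 2)) * g' x) x :=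
    (hasDerivAt_id x).add ((hasDerivAt_arccos hg_ne_neg_one hg_ne_one).comp x (hg x))
  have hroot_pos : 0 < √(1 - g x ^ 2) := sqrt_pos.2 (by linarith)
  have hg'_lt : g' x < √(1 - g x ^ 2) := lt_sqrt_of_sq_lt (by linarith [hbound x])
  rw [hderiv.deriv, neg_mul, one_div_mul_eq_div, ← sub_eq_add_neg, sub_pos,
    div_lt_one hroot_pos]
  exact hg'_lt

theorem hasDerivAt_sphericalCos (β c θ : ℝ) :
    HasDerivAt (fun θ => cos θ * cos β + sin θ * sin β * c)
      (-sin θ * cos β + cos θ * sin β * c) θ :=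
  ((hasDerivAt_cos θ).mul_const _).add (((hasDerivAt_sin θ).mul_const _).mul_const _)

theorem sphericalCos_sq_add_deriv_sq (β c θ : ℝ) :
    (cos θ * cos β + sin θ * sin β * c) ^ 2 + (-sin θ * cos β + cos θ * sin β * c) ^ 2
      = cos β ^ 2 + c ^ 2 * sin β ^ 2 := by
  linear_combination (cos β ^ 2 + c ^ 2 * sin β ^ 2) * sin_sq_add_cos_sq θ

theorem cos_sq_add_sq_mul_sin_sq_lt_one {β c : ℝ} (hβ : sin β ≠ 0) (hc : c ^ 2 < 1) :
    cos β ^ 2 + c ^ 2 * sin β ^ 2 < 1 := by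
  have hsin_sq : 0 < sin β ^ 2 := by positivity
  nlinarith [sin_sq_add_cos_sq β]

theorem angle_sum_strict_mono
    (β α : ℝ) (hβ : β ∈ Set.Ioo 0 π) (hα : α ∈ Set.Ioo 0 (2 * π)) (hα' : α ≠ π) :
    StrictMonoOn
      (fun θ₁ : ℝ => θ₁ +
        Real.arccos (Real.cos θ₁ * Real.cos β + Real.sin θ₁ * Real.sin β * Real.cos α))
      (Set.Icc 0 π) := by
  have hsin_β : sin β ≠ 0 := (sin_pos_of_pos_of_lt_pi hβ.1 hβ.2).ne'
  have hcos_α : cos α ^ 2 < 1 := by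
    have hsin_α : 0 < sin α ^ 2 := by positivity [sin_ne_zero_of_mem_Ioo_of_ne_pi hα hα']
    linarith [sin_sq_add_cos_sq α]
  refine (strictMono_add_arccos (hasDerivAt_sphericalCos β (cos α)) fun θ => ?_).strictMonoOn _
  rw [sphericalCos_sq_add_deriv_sq]
  exact cos_sq_add_sq_mul_sin_sq_lt_one hsin_β hcos_α
end

section
/- Fix β ∈ (0,π) and k ∈ (β, 2π−β). The set of unit vectors r ∈ S² such that arccos⟨r, u⟩ + arccos⟨r, v⟩ = k, where u, v are fixed unit vectors with arccos⟨u,v⟩ = β, is a nonempty closed curve (a spherical ellipse with foci u and v) that intersects each half-plane bounded by the line through u in exactly one point. -/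
open Real
open scoped RealInnerProductSpace

set_option maxHeartbeats 1000000

private lemma norm_combo (u w : EuclideanSpace ℝ (Fin 3)) (hu : ‖u‖ = 1) (hw : ‖w‖ = 1)
    (hperp : ⟪u, w⟫ = 0) (s t : ℝ) : ‖s • u + t • w‖ ^ 2 = s ^ 2 + t ^ 2 := by
  rw [norm_add_sq_real, norm_smul, norm_smul, real_inner_smul_left, real_inner_smul_right,
    hperp, hu, hw]
  simp [mul_pow, sq_abs]

private lemma coskltcosb (β k : ℝ) (hβ : β ∈ Set.Ioo 0 π) (hk : k ∈ Set.Ioo β (2 * π - β)) :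
    Real.cos k < Real.cos β := by
  obtain ⟨hβ0, hβπ⟩ := hβ
  obtain ⟨hk1, hk2⟩ := hk
  have h1 : Real.cos k - Real.cos β = -2 * Real.sin ((k + β) / 2) * Real.sin ((k - β) / 2) :=
    Real.cos_sub_cos k β
  have hs1 : 0 < Real.sin ((k + β) / 2) :=
    Real.sin_pos_of_pos_of_lt_pi (by linarith) (by linarith)
  have hs2 : 0 < Real.sin ((k - β) / 2) :=
    Real.sin_pos_of_pos_of_lt_pi (by linarith) (by linarith)
  nlinarith

private lemma key (β k : ℝ) (hβ : β ∈ Set.Ioo 0 π) (hk : k ∈ Set.Ioo β (2 * π - β))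
    (u v w : EuclideanSpace ℝ (Fin 3)) (hu : ‖u‖ = 1) (hv : ‖v‖ = 1) (hw : ‖w‖ = 1)
    (huv : Real.arccos ⟪u, v⟫ = β) (hperp : ⟪u, w⟫ = 0) :
    ∃! r : EuclideanSpace ℝ (Fin 3),
      (‖r‖ = 1 ∧ Real.arccos ⟪r, u⟫ + Real.arccos ⟪r, v⟫ = k) ∧
      ∃ s t : ℝ, 0 < t ∧ r = s • u + t • w := by
  obtain ⟨hβ0, hβπ⟩ := hβ
  obtain ⟨hk1, hk2⟩ := hk
  have huv1 : |⟪u, v⟫| ≤ 1 := by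
    have := abs_real_inner_le_norm u v; rw [hu, hv] at this; simpa using this
  have hcb : ⟪u, v⟫ = Real.cos β := by
    rw [← huv, Real.cos_arccos (by linarith [abs_le.mp huv1]) (by linarith [abs_le.mp huv1])]
  set c : ℝ := ⟪w, v⟫ with hc
  -- the key computation of inner products for points on the half plane
  have hinner : ∀ s t : ℝ, ⟪s • u + t • w, v⟫ = Real.cos β * s + c * t := by
    intro s t
    rw [inner_add_left, real_inner_smul_left, real_inner_smul_left, hcb]
    ring
  have hinneru : ∀ s t : ℝ, ⟪s • u + t • w, u⟫ = s := by
    intro s t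
    rw [inner_add_left, real_inner_smul_left, real_inner_smul_left,
      real_inner_self_eq_norm_sq, hu, real_inner_comm, hperp]
    ring
  have hnorm : ∀ s t : ℝ, s ^ 2 + t ^ 2 = 1 → ‖s • u + t • w‖ = 1 := by
    intro s t hst
    have h2 := norm_combo u w hu hw hperp s t
    rw [hst] at h2
    rw [← Real.sqrt_sq (norm_nonneg _), h2, Real.sqrt_one]
  -- the function f
  set f : ℝ → ℝ := fun φ => φ + Real.arccos (Real.cos β * Real.cos φ + c * Real.sin φ) with hf
  have hfc : Continuous f := by
    apply Continuous.add continuous_id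
    exact Real.continuous_arccos.comp
      (((continuous_const.mul Real.continuous_cos)).add ((continuous_const.mul Real.continuous_sin)))
  have hf0 : f 0 = β := by
    simp only [hf, Real.cos_zero, Real.sin_zero, mul_one, mul_zero, add_zero, zero_add]
    exact Real.arccos_cos hβ0.le hβπ.le
  have hfπ : f π = 2 * π - β := by
    have hx : Real.cos β * Real.cos π + c * Real.sin π = -Real.cos β := by simp
    simp only [hf, hx]
    rw [Real.arccos_neg, Real.arccos_cos hβ0.le hβπ.le]
    ring
  -- existence via IVT
  have hmem : k ∈ Set.Icc (f 0) (f π) := by rw [hf0, hfπ]; exact ⟨hk1.le, hk2.le⟩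
  obtain ⟨φ₀, hφ₀mem, hφ₀⟩ := intermediate_value_Icc Real.pi_pos.le hfc.continuousOn hmem
  have hφ₀0 : 0 < φ₀ := by
    rcases lt_or_eq_of_le hφ₀mem.1 with h | h
    · exact h
    · exfalso; rw [← h, hf0] at hφ₀; linarith
  have hφ₀π : φ₀ < π := by
    rcases lt_or_eq_of_le hφ₀mem.2 with h | h
    · exact h
    · exfalso; rw [h, hfπ] at hφ₀; linarith
  have hsin₀ : 0 < Real.sin φ₀ := Real.sin_pos_of_pos_of_lt_pi hφ₀0 hφ₀π
  set r₀ : EuclideanSpace ℝ (Fin 3) := Real.cos φ₀ • u + Real.sin φ₀ • w with hr₀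
  -- the uniqueness core: any admissible point equals r₀
  -- first establish the cos-equation for φ₀
  have heq₀ : (Real.cos k - Real.cos β) * Real.cos φ₀ = (c - Real.sin k) * Real.sin φ₀ := by
    have hrv : ⟪r₀, v⟫ = Real.cos β * Real.cos φ₀ + c * Real.sin φ₀ := hinner _ _
    have hbd : |⟪r₀, v⟫| ≤ 1 := by
      have h1 := hnorm (Real.cos φ₀) (Real.sin φ₀) (by
        rw [← Real.sin_sq_add_cos_sq φ₀]; ring)
      have := abs_real_inner_le_norm r₀ v
      rw [h1, hv] at this; simpa using this
    have harc : Real.arccos (Real.cos β * Real.cos φ₀ + c * Real.sin φ₀) = k - φ₀ := by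
      have := hφ₀; simp only [hf] at this; linarith
    have : Real.cos (k - φ₀) = Real.cos β * Real.cos φ₀ + c * Real.sin φ₀ := by
      rw [← harc]
      rw [← hrv] at *
      exact Real.cos_arccos (by linarith [abs_le.mp hbd]) (by linarith [abs_le.mp hbd])
    rw [Real.cos_sub] at this
    nlinarith [this]
  refine ⟨r₀, ⟨⟨?_, ?_⟩, Real.cos φ₀, Real.sin φ₀, hsin₀, rfl⟩, ?_⟩
  · exact hnorm _ _ (by rw [← Real.sin_sq_add_cos_sq φ₀]; ring)
  · have h1 : ⟪r₀, u⟫ = Real.cos φ₀ := hinneru _ _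
    have h2 : ⟪r₀, v⟫ = Real.cos β * Real.cos φ₀ + c * Real.sin φ₀ := hinner _ _
    rw [h1, h2, Real.arccos_cos hφ₀0.le hφ₀π.le]
    have := hφ₀; simp only [hf] at this; linarith
  · -- uniqueness
    rintro r ⟨⟨hrn, hrk⟩, s, t, ht, rfl⟩
    have hst : s ^ 2 + t ^ 2 = 1 := by
      have h2 := norm_combo u w hu hw hperp s t
      rw [hrn] at h2; simpa using h2.symm
    have hs1 : -1 < s := by nlinarith
    have hs2 : s < 1 := by nlinarith
    set φ : ℝ := Real.arccos s with hφdef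
    have hφ0 : 0 < φ := Real.arccos_pos.mpr hs2
    have hφπ : φ < π := by
      rcases lt_or_eq_of_le (Real.arccos_le_pi s) with h | h
      · exact h
      · exfalso; have := Real.arccos_eq_pi.mp h; linarith
    have hcosφ : Real.cos φ = s := Real.cos_arccos hs1.le hs2.le
    have hsinφ : Real.sin φ = t := by
      rw [hφdef, Real.sin_arccos]
      rw [show 1 - s ^ 2 = t ^ 2 by linarith]
      exact Real.sqrt_sq ht.le
    have heq : (Real.cos k - Real.cos β) * Real.cos φ = (c - Real.sin k) * Real.sin φ := by
      rw [hcosφ, hsinφ]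
      have hrv : ⟪s • u + t • w, v⟫ = Real.cos β * s + c * t := hinner _ _
      have hbd : |⟪s • u + t • w, v⟫| ≤ 1 := by
        have := abs_real_inner_le_norm (s • u + t • w) v
        rw [hrn, hv] at this; simpa using this
      have hru : ⟪s • u + t • w, u⟫ = s := hinneru _ _
      have harcu : Real.arccos ⟪s • u + t • w, u⟫ = φ := by rw [hru]
      have harc : Real.arccos ⟪s • u + t • w, v⟫ = k - φ := by
        rw [harcu] at hrk; linarith
      have : Real.cos (k - φ) = Real.cos β * s + c * t := by
        rw [← harc, Real.cos_arccos (by linarith [abs_le.mp hbd]) (by linarith [abs_le.mp hbd]),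
          hrv]
      rw [Real.cos_sub, hcosφ, hsinφ] at this
      nlinarith [this]
    -- combine heq and heq₀
    have hck : Real.cos k - Real.cos β ≠ 0 := by
      have := coskltcosb β k ⟨hβ0, hβπ⟩ ⟨hk1, hk2⟩; linarith
    have hmul : (Real.cos k - Real.cos β) *
        (Real.sin φ₀ * Real.cos φ - Real.cos φ₀ * Real.sin φ) = 0 := by
      linear_combination Real.sin φ₀ * heq - Real.sin φ * heq₀
    have hzero : Real.sin (φ₀ - φ) = 0 := by
      rw [Real.sin_sub]
      rcases mul_eq_zero.mp hmul with h | h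
      · exact absurd h hck
      · exact h
    have hφeq : φ₀ = φ := by
      have := (Real.sin_eq_zero_iff_of_lt_of_lt (by linarith) (by linarith)).mp hzero
      linarith
    rw [hr₀, hφeq, hcosφ, hsinφ]

private lemma exists_ortho (u : EuclideanSpace ℝ (Fin 3)) (hu : ‖u‖ = 1) :
    ∃ w : EuclideanSpace ℝ (Fin 3), ‖w‖ = 1 ∧ ⟪u, w⟫ = 0 := by
  have hune : u ≠ 0 := by intro h; rw [h, norm_zero] at hu; norm_num at hu
  have hspan : (ℝ ∙ u) ≠ ⊤ := by
    intro h
    have h1 : Module.finrank ℝ (ℝ ∙ u) = 1 := finrank_span_singleton hune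
    rw [h] at h1
    have h2 : Module.finrank ℝ (⊤ : Submodule ℝ (EuclideanSpace ℝ (Fin 3))) = 3 := by
      rw [finrank_top]; simp [finrank_euclideanSpace]
    omega
  have hbot : (ℝ ∙ u)ᗮ ≠ ⊥ := by
    intro h
    exact hspan (Submodule.orthogonal_eq_bot_iff.mp h)
  obtain ⟨w', hw'mem, hw'ne⟩ := Submodule.exists_mem_ne_zero_of_ne_bot hbot
  have hperp' : ⟪u, w'⟫ = 0 := by
    have := (Submodule.mem_orthogonal _ _).mp hw'mem u (Submodule.mem_span_singleton_self u)
    simpa [real_inner_comm] using this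
  refine ⟨‖w'‖⁻¹ • w', ?_, ?_⟩
  · rw [norm_smul, norm_inv, norm_norm, inv_mul_cancel₀ (norm_ne_zero_iff.mpr hw'ne)]
  · rw [real_inner_smul_right, hperp', mul_zero]

theorem spherical_ellipse_nonempty_closed_unique_intersection
    (β k : ℝ) (hβ : β ∈ Set.Ioo 0 π) (hk : k ∈ Set.Ioo β (2 * π - β))
    (u v : EuclideanSpace ℝ (Fin 3))
    (hu : ‖u‖ = 1) (hv : ‖v‖ = 1) (huv : Real.arccos ⟪u, v⟫ = β) :
    let Γ : Set (EuclideanSpace ℝ (Fin 3)) :=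
      {r | ‖r‖ = 1 ∧ Real.arccos ⟪r, u⟫ + Real.arccos ⟪r, v⟫ = k}
    Γ.Nonempty ∧ IsClosed Γ ∧
      ∀ w : EuclideanSpace ℝ (Fin 3), ‖w‖ = 1 → ⟪u, w⟫ = 0 →
        ∃! r : EuclideanSpace ℝ (Fin 3),
          r ∈ Γ ∧ ∃ s t : ℝ, 0 < t ∧ r = s • u + t • w := by
  intro Γ
  refine ⟨?_, ?_, ?_⟩
  · obtain ⟨w, hw, hperp⟩ := exists_ortho u hu
    obtain ⟨r, ⟨hr, _⟩, _⟩ := key β k hβ hk u v w hu hv hw huv hperp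
    exact ⟨r, hr⟩
  · have : Γ = {r : EuclideanSpace ℝ (Fin 3) | ‖r‖ = 1} ∩
        {r : EuclideanSpace ℝ (Fin 3) |
          Real.arccos ⟪r, u⟫ + Real.arccos ⟪r, v⟫ = k} := rfl
    rw [this]
    refine IsClosed.inter (isClosed_eq continuous_norm continuous_const)
      (isClosed_eq ?_ continuous_const)
    exact ((Real.continuous_arccos.comp (Continuous.inner continuous_id continuous_const)).add
      (Real.continuous_arccos.comp (Continuous.inner continuous_id continuous_const)))
  · intro w hw hperp
    exact key β k hβ hk u v w hu hv hw huv hperp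
end

section
/- Suppose θ₁ = π/2 solves the vertex equations; then cos θ₂ = sin β cos α, and if β ∈ (0,π) with β ≠ π/2 or cos α ≠ 0, and k = π/2 + θ₂ with θ₂ ∈ (0,π), this solution is the unique pair (θ₁,θ₂) ∈ (0,π)² with θ₁ + θ₂ = k and cos θ₂ = cos θ₁ cos β + sin θ₁ sin β cos α, provided β < k < 2π − β. -/
open Real

theorem degenerate_right_angle_solution
    (β α k θ₂ : ℝ)
    (hβ : β ∈ Set.Ioo 0 π)
    (hcase : β ≠ π / 2 ∨ Real.cos α ≠ 0)
    (hθ₂ : θ₂ ∈ Set.Ioo 0 π)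
    (hθ₂law : Real.cos θ₂ = Real.sin β * Real.cos α)
    (hkdef : k = π / 2 + θ₂)
    (hk : β < k) (hk' : k < 2 * π - β) :
    (Real.cos θ₂ = Real.cos (π / 2) * Real.cos β +
        Real.sin (π / 2) * Real.sin β * Real.cos α) ∧
    ∀ θ₁' θ₂' : ℝ, θ₁' ∈ Set.Ioo 0 π → θ₂' ∈ Set.Ioo 0 π → θ₁' + θ₂' = k →
      Real.cos θ₂' = Real.cos θ₁' * Real.cos β + Real.sin θ₁' * Real.sin β * Real.cos α →
      θ₁' = π / 2 ∧ θ₂' = θ₂ := by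
  have hpi := Real.pi_pos
  constructor
  · simp [hθ₂law]
  · intro θ₁' θ₂' h1 h2 hsum hlaw
    -- key: sin k = cos θ₂ = sin β * cos α
    have hsink : Real.sin k = Real.sin β * Real.cos α := by
      rw [hkdef, Real.sin_add]; simp [hθ₂law]
    -- cos k ≠ cos β
    have hA : Real.cos k - Real.cos β ≠ 0 := by
      rw [Real.cos_sub_cos]
      have h1' : 0 < (k + β) / 2 := by linarith [hβ.1]
      have h2' : (k + β) / 2 < π := by linarith
      have h3' : 0 < (k - β) / 2 := by linarith
      have h4' : (k - β) / 2 < π := by linarith [hβ.1]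
      have s1 := Real.sin_pos_of_pos_of_lt_pi h1' h2'
      have s2 := Real.sin_pos_of_pos_of_lt_pi h3' h4'
      nlinarith
    have hθ₂'eq : θ₂' = k - θ₁' := by linarith
    rw [hθ₂'eq, Real.cos_sub, hsink] at hlaw
    have hfac : Real.cos θ₁' * (Real.cos k - Real.cos β) = 0 := by ring_nf; nlinarith [hlaw]
    have hc0 : Real.cos θ₁' = 0 := by
      rcases mul_eq_zero.mp hfac with h | h
      · exact h
      · exact absurd h hA
    have hθ₁' : θ₁' = π / 2 := by
      have hmem1 : θ₁' ∈ Set.Icc 0 π := ⟨le_of_lt h1.1, le_of_lt h1.2⟩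
      have hmem2 : π / 2 ∈ Set.Icc 0 π := ⟨by linarith, by linarith⟩
      exact Real.injOn_cos hmem1 hmem2 (by simp [hc0])
    exact ⟨hθ₁', by rw [hθ₂'eq, hθ₁', hkdef]; ring⟩
end

section
/- For β ∈ (0,π) fixed and k ∈ (β, 2π−β), the map α ↦ (θ₁(α), θ₂(α)) from [0,2π) to the set {(θ₁,θ₂) ∈ (0,π)² : θ₁+θ₂ = k, ∃α′, cos θ₂ = cos θ₁ cos β + sin θ₁ sin β cos α′} is surjective, and restricted to [0,π] it is injective. -/
open Real

lemma theta_unique (β k : ℝ) (hβ : β ∈ Set.Ioo 0 π) (hk : k ∈ Set.Ioo β (2 * π - β))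
    (c θ θ' : ℝ) (hθ : θ ∈ Set.Ioo 0 π) (hθ' : θ' ∈ Set.Ioo 0 π)
    (h1 : Real.cos (k - θ) = Real.cos θ * Real.cos β + Real.sin θ * Real.sin β * c)
    (h2 : Real.cos (k - θ') = Real.cos θ' * Real.cos β + Real.sin θ' * Real.sin β * c) :
    θ = θ' := by
  have hD : Real.cos k - Real.cos β < 0 := by
    rw [Real.cos_sub_cos]
    have h1 : Real.sin ((k + β) / 2) > 0 := by
      apply Real.sin_pos_of_pos_of_lt_pi <;> [linarith [hβ.1, hk.1]; linarith [hk.2, hβ.1]]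
    have h2 : Real.sin ((k - β) / 2) > 0 := by
      apply Real.sin_pos_of_pos_of_lt_pi <;> [linarith [hk.1]; linarith [hk.2, hβ.1]]
    nlinarith
  have hs : Real.sin θ > 0 := Real.sin_pos_of_pos_of_lt_pi hθ.1 hθ.2
  have hs' : Real.sin θ' > 0 := Real.sin_pos_of_pos_of_lt_pi hθ'.1 hθ'.2
  rw [Real.cos_sub] at h1 h2
  have e1 : Real.cos θ * (Real.cos k - Real.cos β) = Real.sin θ * (Real.sin β * c - Real.sin k) := by
    nlinarith [h1]
  have e2 : Real.cos θ' * (Real.cos k - Real.cos β) = Real.sin θ' * (Real.sin β * c - Real.sin k) := by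
    nlinarith [h2]
  have key : Real.sin (θ' - θ) = 0 := by
    rw [Real.sin_sub]
    have : (Real.sin θ' * Real.cos θ - Real.cos θ' * Real.sin θ) * (Real.cos k - Real.cos β) = 0 := by
      nlinarith [e1, e2]
    have h0 := mul_eq_zero.mp this
    rcases h0 with h0 | h0
    · linarith
    · linarith
  have := (Real.sin_eq_zero_iff_of_lt_of_lt (by linarith [hθ.2, hθ'.1] : -π < θ' - θ)
    (by linarith [hθ'.2, hθ.1] : θ' - θ < π)).mp key
  linarith

theorem flap_angle_parameterizes_ellipse
    (β k : ℝ) (hβ : β ∈ Set.Ioo 0 π) (hk : k ∈ Set.Ioo β (2 * π - β))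
    (Θ : ℝ → ℝ × ℝ)
    (hΘ : ∀ α : ℝ, (Θ α).1 ∈ Set.Ioo 0 π ∧ (Θ α).2 ∈ Set.Ioo 0 π ∧
      (Θ α).1 + (Θ α).2 = k ∧
      Real.cos (Θ α).2 = Real.cos (Θ α).1 * Real.cos β +
        Real.sin (Θ α).1 * Real.sin β * Real.cos α) :
    (∀ p : ℝ × ℝ,
        p.1 ∈ Set.Ioo 0 π → p.2 ∈ Set.Ioo 0 π → p.1 + p.2 = k →
        (∃ α' : ℝ, Real.cos p.2 = Real.cos p.1 * Real.cos β +
          Real.sin p.1 * Real.sin β * Real.cos α') →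
        ∃ α ∈ Set.Ico 0 (2 * π), Θ α = p) ∧
    Set.InjOn Θ (Set.Icc 0 π) := by
  have hπ : (0:ℝ) < 2 * π := by positivity
  constructor
  · rintro p hp1 hp2 hps ⟨α', hα'⟩
    set α : ℝ := α' - ⌊α' / (2 * π)⌋ * (2 * π) with hα
    have hcos : Real.cos α = Real.cos α' := Real.cos_sub_int_mul_two_pi α' _
    refine ⟨α, ⟨?_, ?_⟩, ?_⟩
    · have := Int.sub_floor_div_mul_nonneg α' hπ
      simpa [hα] using this
    · have := Int.sub_floor_div_mul_lt α' hπ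
      simpa [hα] using this
    · obtain ⟨h1, h2, h3, h4⟩ := hΘ α
      have heq1 : Real.cos (k - (Θ α).1) = Real.cos (Θ α).1 * Real.cos β +
          Real.sin (Θ α).1 * Real.sin β * Real.cos α' := by
        rw [show k - (Θ α).1 = (Θ α).2 by linarith, ← hcos]; exact h4
      have heq2 : Real.cos (k - p.1) = Real.cos p.1 * Real.cos β +
          Real.sin p.1 * Real.sin β * Real.cos α' := by
        rw [show k - p.1 = p.2 by linarith]; exact hα'
      have hfst : (Θ α).1 = p.1 := theta_unique β k hβ hk (Real.cos α') _ _ h1 hp1 heq1 heq2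
      have hsnd : (Θ α).2 = p.2 := by linarith
      exact Prod.ext hfst hsnd
  · intro a ha b hb hab
    obtain ⟨h1, h2, h3, h4⟩ := hΘ a
    obtain ⟨g1, g2, g3, g4⟩ := hΘ b
    have hs : Real.sin (Θ a).1 > 0 := Real.sin_pos_of_pos_of_lt_pi h1.1 h1.2
    have hsβ : Real.sin β > 0 := Real.sin_pos_of_pos_of_lt_pi hβ.1 hβ.2
    rw [hab] at h4
    have : Real.cos a = Real.cos b := by
      rw [hab] at *
      nlinarith [h4, g4, mul_pos hs hsβ]
    exact Real.injOn_cos ha hb this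
end
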